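/- Let n ≥ 2 and let t satisfy ⌈n/2⌉ < t ≤ n. Then exactly two connected components of the t-graph Γ(2,n,t) of the dihedral group D_n contain more than one vertex, and each of these two components has exactly 2(n − t) + 2 vertices. -/

import Mathlib

/-- The `t`-graph `Γ(m,n,t)`: vertices are `Fin m × Fin n` (the vertex `(i,j)` encoding
`a^i b^j`), and two distinct vertices `(i,j)`, `(k,l)` are adjacent iff
`|i - k| + |j - l| = t` (comparing coordinates as integers). -/
def tGraph (m n t : ℕ) : SimpleGraph (Fin m × Fin n) where
  Adj x y := x ≠ y ∧ |(x.1 : ℤ) - (y.1 : ℤ)| + |(x.2 : ℤ) - (y.2 : ℤ)| = t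
  symm := by
    constructor
    rintro x y ⟨h1, h2⟩
    exact ⟨h1.symm, by rw [abs_sub_comm ((y.1 : ℤ)), abs_sub_comm ((y.2 : ℤ))]; exact h2⟩
  loopless := ⟨fun x ⟨h, _⟩ => h rfl⟩

instance (m n t : ℕ) : DecidableRel (tGraph m n t).Adj := fun x y =>
  inferInstanceAs (Decidable (x ≠ y ∧ |(x.1 : ℤ) - (y.1 : ℤ)| + |(x.2 : ℤ) - (y.2 : ℤ)| = t))

/-!
When `n + 2 ≤ 2t`, a same-row edge of `Γ(2,n,t)` spans `t` columns and a cross edge `t - 1`, so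
every edge joins a low column `j ≤ n - t` to a high column `j ≥ t - 1`, and these two ranges are
disjoint. Hence the vertices in the columns strictly between them are isolated, and the parity of
`i + j`, shifted by `t` on the high columns, is constant along edges. Conversely, within one parity
class the low vertices are chained by the paths `(i, j) – (i, j + t) – (1 - i, j + 1)`, and every
high vertex is adjacent to a low one. So the non-isolated vertices split into exactly two
components, the two parity classes, and each of them meets each of the `2(n - t + 1)` low or high
columns in exactly one vertex.
-/

namespace SimpleGraph

variable {V β : Type*} {G : SimpleGraph V} {u v : V}

theorem Reachable.apply_eq_of_forall_adj (f : V → β) (hf : ∀ x y, G.Adj x y → f x = f y)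
    (h : G.Reachable u v) : f u = f v := by
  obtain ⟨p⟩ := h
  induction p with
  | nil => rfl
  | cons ha _ ih => exact (hf _ _ ha).trans ih

theorem IsIsolated.eq_of_reachable (hu : G.IsIsolated u) (h : G.Reachable u v) : v = u := by
  obtain ⟨p⟩ := h
  cases p with
  | nil => rfl
  | cons ha _ => exact absurd ha (hu _)

end SimpleGraph

open SimpleGraph

section

variable {n t : ℕ}

theorem tGraph_two_adj_iff (ht : 1 ≤ t) {x y : Fin 2 × Fin n} :
    (tGraph 2 n t).Adj x y ↔
      ((x.1 : ℕ) = y.1 ∧ ((x.2 : ℕ) + t = y.2 ∨ (y.2 : ℕ) + t = x.2)) ∨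
      ((x.1 : ℕ) ≠ y.1 ∧ ((x.2 : ℕ) + t = y.2 + 1 ∨ (y.2 : ℕ) + t = x.2 + 1)) := by
  have := x.1.isLt; have := y.1.isLt
  simp only [tGraph, ne_eq, Prod.ext_iff, Fin.ext_iff, abs_eq_max_neg]
  omega

def IsLinkedCol (n t j : ℕ) : Prop := j + t ≤ n ∨ t ≤ j + 1

instance (n t : ℕ) : DecidablePred (IsLinkedCol n t) := fun _ =>
  inferInstanceAs (Decidable (_ ∨ _))

def tGraphColour (n t : ℕ) (v : Fin 2 × Fin n) : ℕ :=
  ((v.1 : ℕ) + v.2 + if (v.2 : ℕ) + t ≤ n then 0 else t) % 2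

theorem tGraphColour_lt_two (v : Fin 2 × Fin n) : tGraphColour n t v < 2 :=
  Nat.mod_lt _ two_pos

theorem tGraphColour_eq_of_adj (h : n + 2 ≤ 2 * t) {x y : Fin 2 × Fin n}
    (hxy : (tGraph 2 n t).Adj x y) : tGraphColour n t x = tGraphColour n t y := by
  rw [tGraph_two_adj_iff (by omega)] at hxy
  unfold tGraphColour
  split_ifs <;> omega

theorem isLinkedCol_of_adj (h : n + 2 ≤ 2 * t) {x y : Fin 2 × Fin n}
    (hxy : (tGraph 2 n t).Adj x y) : IsLinkedCol n t x.2 := by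
  rw [tGraph_two_adj_iff (by omega)] at hxy
  have := y.2.isLt
  unfold IsLinkedCol
  omega

theorem isIsolated_of_not_isLinkedCol (h : n + 2 ≤ 2 * t) {x : Fin 2 × Fin n}
    (hx : ¬ IsLinkedCol n t x.2) : (tGraph 2 n t).IsIsolated x :=
  fun _ hxy => hx (isLinkedCol_of_adj h hxy)

theorem tGraphColour_of_add_le {v : Fin 2 × Fin n} (hv : (v.2 : ℕ) + t ≤ n) :
    tGraphColour n t v = ((v.1 : ℕ) + v.2) % 2 := by
  simp [tGraphColour, hv]

theorem tGraph_reachable_of_val_eq_succ (h : n + 2 ≤ 2 * t) {x y : Fin 2 × Fin n}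
    (hrow : (x.1 : ℕ) ≠ y.1) (hcol : (y.2 : ℕ) = x.2 + 1) (hy : (y.2 : ℕ) + t ≤ n) :
    (tGraph 2 n t).Reachable x y :=
  let m : Fin 2 × Fin n := (x.1, ⟨x.2 + t, by omega⟩)
  have hxm : (tGraph 2 n t).Adj x m := (tGraph_two_adj_iff (by omega)).2 (.inl ⟨rfl, .inl rfl⟩)
  have hmy : (tGraph 2 n t).Adj m y := (tGraph_two_adj_iff (by omega)).2 (by simp only [m]; omega)
  hxm.reachable.trans hmy.reachable

theorem tGraph_reachable_of_add_le (h : n + 2 ≤ 2 * t) {x y : Fin 2 × Fin n}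
    (hy : (y.2 : ℕ) + t ≤ n) (hxy : (x.2 : ℕ) ≤ y.2)
    (hc : ((x.1 : ℕ) + x.2) % 2 = ((y.1 : ℕ) + y.2) % 2) : (tGraph 2 n t).Reachable x y := by
  obtain ⟨k, hk⟩ := Nat.exists_eq_add_of_le hxy
  induction k generalizing y with
  | zero =>
    have := x.1.isLt; have := y.1.isLt
    rw [show x = y by ext <;> omega]
  | succ k ih =>
    have := y.1.isLt
    let y' : Fin 2 × Fin n := (⟨1 - y.1, by omega⟩, ⟨y.2 - 1, by omega⟩)
    have hxy' : (tGraph 2 n t).Reachable x y' :=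
      ih (by simp only [y']; omega) (by simp only [y']; omega) (by simp only [y']; omega) (by simp only [y']; omega)
    exact hxy'.trans
      (tGraph_reachable_of_val_eq_succ h (by simp only [y']; omega) (by simp only [y']; omega) hy)

theorem exists_reachable_of_isLinkedCol (h : n + 2 ≤ 2 * t) (htn : t ≤ n) {x : Fin 2 × Fin n}
    (hx : IsLinkedCol n t x.2) : ∃ y : Fin 2 × Fin n, (y.2 : ℕ) + t ≤ n ∧
      tGraphColour n t y = tGraphColour n t x ∧ (tGraph 2 n t).Reachable y x := by
  by_cases hlow : (x.2 : ℕ) + t ≤ n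
  · exact ⟨x, hlow, rfl, .rfl⟩
  have hcol : tGraphColour n t x = ((x.1 : ℕ) + x.2 + t) % 2 := by simp [tGraphColour, hlow]
  have := x.1.isLt; have := x.2.isLt
  unfold IsLinkedCol at hx
  rcases Nat.lt_or_ge (x.2 : ℕ) t with hlt | hge
  · refine ⟨(⟨1 - x.1, by omega⟩, ⟨0, by omega⟩), by simpa using htn, ?_, ?_⟩
    · rw [hcol, tGraphColour_of_add_le (by simpa using htn)]
      simp only
      omega
    · exact Adj.reachable ((tGraph_two_adj_iff (by omega)).2 (by dsimp only; omega))
  · refine ⟨(x.1, ⟨x.2 - t, by omega⟩), by dsimp only; omega, ?_, ?_⟩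
    · rw [hcol, tGraphColour_of_add_le (by dsimp only; omega)]
      simp only
      omega
    · exact Adj.reachable ((tGraph_two_adj_iff (by omega)).2 (by dsimp only; omega))

theorem tGraph_reachable_of_tGraphColour_eq (h : n + 2 ≤ 2 * t) (htn : t ≤ n)
    {x y : Fin 2 × Fin n} (hx : IsLinkedCol n t x.2) (hy : IsLinkedCol n t y.2)
    (hc : tGraphColour n t x = tGraphColour n t y) : (tGraph 2 n t).Reachable x y := by
  obtain ⟨x', hx', hcx, hxx'⟩ := exists_reachable_of_isLinkedCol h htn hx
  obtain ⟨y', hy', hcy, hyy'⟩ := exists_reachable_of_isLinkedCol h htn hy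
  rw [← hcx, ← hcy, tGraphColour_of_add_le hx', tGraphColour_of_add_le hy'] at hc
  have hx'y' : (tGraph 2 n t).Reachable x' y' := by
    rcases le_total (x'.2 : ℕ) y'.2 with hle | hle
    · exact tGraph_reachable_of_add_le h hy' hle hc
    · exact (tGraph_reachable_of_add_le h hx' hle hc.symm).symm
  exact hxx'.symm.trans (hx'y'.trans hyy')

theorem card_isLinkedCol (h : n + 2 ≤ 2 * t) (htn : t ≤ n) :
    Nat.card {j : Fin n // IsLinkedCol n t j} = 2 * (n - t) + 2 := by
  rw [Nat.card_eq_fintype_card, Fintype.card_subtype, Finset.card_filter,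
    Fin.sum_univ_eq_sum_range (fun j => if IsLinkedCol n t j then 1 else 0), ← Finset.card_filter]
  have hsplit : (Finset.range n).filter (IsLinkedCol n t) =
      Finset.range (n - t + 1) ∪ Finset.Ico (t - 1) n := by
    ext j
    simp only [IsLinkedCol, Finset.mem_filter, Finset.mem_range, Finset.mem_union, Finset.mem_Ico]
    omega
  have hdisj : Disjoint (Finset.range (n - t + 1)) (Finset.Ico (t - 1) n) := by
    rw [Finset.disjoint_left]
    simp only [Finset.mem_range, Finset.mem_Ico]
    omega
  rw [hsplit, Finset.card_union_of_disjoint hdisj, Finset.card_range, Nat.card_Ico]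
  omega

theorem card_tGraphColour_eq (h : n + 2 ≤ 2 * t) (htn : t ≤ n) {c : ℕ} (hc : c < 2) :
    Nat.card {v : Fin 2 × Fin n // IsLinkedCol n t v.2 ∧ tGraphColour n t v = c} =
      2 * (n - t) + 2 := by
  rw [← card_isLinkedCol h htn]
  refine Nat.card_congr (Equiv.ofBijective (fun v => ⟨v.1.2, v.2.1⟩) ⟨?_, ?_⟩)
  · intro ⟨v, _, hv⟩ ⟨w, _, hw⟩ hvw
    simp only [Subtype.mk.injEq] at hvw ⊢
    refine Prod.ext (Fin.ext ?_) hvw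
    have := v.1.isLt; have := w.1.isLt
    unfold tGraphColour at hv hw
    rw [hvw] at hv
    split_ifs at hv hw <;> omega
  · rintro ⟨j, hj⟩
    have hrow : ∃ i : Fin 2, tGraphColour n t (i, j) = c := by
      by_cases h0 : tGraphColour n t (0, j) = c
      · exact ⟨0, h0⟩
      · refine ⟨1, ?_⟩
        unfold tGraphColour at h0 ⊢
        simp only [Fin.val_zero, Fin.val_one] at h0 ⊢
        split_ifs at h0 ⊢ <;> omega
    obtain ⟨i, hi⟩ := hrow
    exact ⟨⟨(i, j), hj, hi⟩, rfl⟩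

theorem supp_tGraph_connectedComponentMk (h : n + 2 ≤ 2 * t) (htn : t ≤ n)
    {v : Fin 2 × Fin n} (hv : IsLinkedCol n t v.2) :
    ((tGraph 2 n t).connectedComponentMk v).supp =
      {w | IsLinkedCol n t w.2 ∧ tGraphColour n t w = tGraphColour n t v} := by
  ext w
  rw [ConnectedComponent.mem_supp_iff, ConnectedComponent.eq, Set.mem_ofPred_eq]
  constructor
  · intro hwv
    have hw : IsLinkedCol n t w.2 := by
      by_contra hw
      exact hw ((isIsolated_of_not_isLinkedCol h hw).eq_of_reachable hwv ▸ hv)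
    exact ⟨hw, hwv.apply_eq_of_forall_adj _ fun _ _ => tGraphColour_eq_of_adj h⟩
  · rintro ⟨hw, hc⟩
    exact tGraph_reachable_of_tGraphColour_eq h htn hw hv hc

theorem supp_tGraph_connectedComponentMk_of_not_isLinkedCol (h : n + 2 ≤ 2 * t)
    {v : Fin 2 × Fin n} (hv : ¬ IsLinkedCol n t v.2) :
    ((tGraph 2 n t).connectedComponentMk v).supp = {v} := by
  ext w
  rw [ConnectedComponent.mem_supp_iff, ConnectedComponent.eq, Set.mem_singleton_iff]
  exact ⟨fun hwv => (isIsolated_of_not_isLinkedCol h hv).eq_of_reachable hwv.symm,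
    fun hw => hw ▸ .rfl⟩

theorem card_supp_tGraph_connectedComponentMk (h : n + 2 ≤ 2 * t) (htn : t ≤ n)
    {v : Fin 2 × Fin n} (hv : IsLinkedCol n t v.2) :
    Nat.card ((tGraph 2 n t).connectedComponentMk v).supp = 2 * (n - t) + 2 := by
  rw [supp_tGraph_connectedComponentMk h htn hv]
  exact card_tGraphColour_eq h htn (tGraphColour_lt_two v)

theorem one_lt_card_supp_tGraph_connectedComponentMk_iff (h : n + 2 ≤ 2 * t) (htn : t ≤ n)
    (v : Fin 2 × Fin n) :
    1 < Nat.card ((tGraph 2 n t).connectedComponentMk v).supp ↔ IsLinkedCol n t v.2 := by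
  by_cases hv : IsLinkedCol n t v.2
  · simp only [card_supp_tGraph_connectedComponentMk h htn hv, hv, iff_true]
    omega
  · rw [supp_tGraph_connectedComponentMk_of_not_isLinkedCol h hv, Nat.card_unique]
    simp [hv]

theorem tGraph_connectedComponentMk_eq_iff (h : n + 2 ≤ 2 * t) (htn : t ≤ n)
    {v w : Fin 2 × Fin n} (hv : IsLinkedCol n t v.2) :
    (tGraph 2 n t).connectedComponentMk w = (tGraph 2 n t).connectedComponentMk v ↔
      IsLinkedCol n t w.2 ∧ tGraphColour n t w = tGraphColour n t v := by
  rw [← ConnectedComponent.mem_supp_iff, supp_tGraph_connectedComponentMk h htn hv]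
  rfl

end

theorem dihedral_tGraph_two_nontrivial_components_general (n t : ℕ)
    (htlb : (n + 1) / 2 < t) (htn : t ≤ n) :
    ∃ C₁ C₂ : (tGraph 2 n t).ConnectedComponent, C₁ ≠ C₂ ∧
      (∀ C : (tGraph 2 n t).ConnectedComponent, 1 < Nat.card C.supp ↔ C = C₁ ∨ C = C₂) ∧
      Nat.card C₁.supp = 2 * (n - t) + 2 ∧ Nat.card C₂.supp = 2 * (n - t) + 2 := by
  have h : n + 2 ≤ 2 * t := by omega
  let v₀ : Fin 2 × Fin n := (0, ⟨0, by omega⟩)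
  let v₁ : Fin 2 × Fin n := (1, ⟨0, by omega⟩)
  have hv₀ : IsLinkedCol n t v₀.2 := Or.inl (by simpa [v₀] using htn)
  have hv₁ : IsLinkedCol n t v₁.2 := Or.inl (by simpa [v₁] using htn)
  have hc₀ : tGraphColour n t v₀ = 0 := by simp [tGraphColour, v₀, htn]
  have hc₁ : tGraphColour n t v₁ = 1 := by simp [tGraphColour, v₁, htn]
  refine ⟨_, _, ?_, fun C => ?_, card_supp_tGraph_connectedComponentMk h htn hv₀,
    card_supp_tGraph_connectedComponentMk h htn hv₁⟩
  · rw [ne_eq, tGraph_connectedComponentMk_eq_iff h htn hv₁, hc₀, hc₁]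
    simp
  · induction C using ConnectedComponent.ind with
    | h v =>
      rw [one_lt_card_supp_tGraph_connectedComponentMk_iff h htn,
        tGraph_connectedComponentMk_eq_iff h htn hv₀, tGraph_connectedComponentMk_eq_iff h htn hv₁,
        hc₀, hc₁]
      have hc : tGraphColour n t v = 0 ∨ tGraphColour n t v = 1 := by
        have := tGraphColour_lt_two (t := t) v
        omega
      rcases hc with hc | hc <;> simp [hc]

/-- For `n ≥ 2` and `⌈n/2⌉ < t ≤ n`, exactly two connected components of the `t`-graph
`Γ(2,n,t)` of the dihedral group `D_n` contain more than one vertex, and each of these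
two components has exactly `2(n - t) + 2` vertices. -/
theorem dihedral_tGraph_two_nontrivial_components (n t : ℕ) (hn : 2 ≤ n)
    (htlb : (n + 1) / 2 < t) (htn : t ≤ n) :
    ∃ C₁ C₂ : (tGraph 2 n t).ConnectedComponent, C₁ ≠ C₂ ∧
      (∀ C : (tGraph 2 n t).ConnectedComponent, 1 < Nat.card C.supp ↔ C = C₁ ∨ C = C₂) ∧
      Nat.card C₁.supp = 2 * (n - t) + 2 ∧ Nat.card C₂.supp = 2 * (n - t) + 2 :=
  dihedral_tGraph_two_nontrivial_components_general n t htlb htn
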